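/- Let 0 < ε < 1, 0 < δ < 1, C > 0, 0 < τ ≤ C, 0 < T < 1, and 0 < q_min ≤ q ≤ 1. Let M ∼ Binomial(n, q) with n ∈ ℕ. If n ≥ max( −2·ln(T/2) / (δ²·q_min), ln(C/τ) / ((1 − δ)·ε·q_min) ), then with probability at least 1 − T/2 one has M ≥ ln(C/τ)/ε, and hence on this event (1 − ε)^M · C ≤ τ. -/

import Mathlib

set_option maxHeartbeats 800000

open MeasureTheory ProbabilityTheory

lemma chernoff_log_aux {δ : ℝ} (h0 : 0 < δ) (h1 : δ < 1) :
    δ ^ 2 / 2 ≤ δ + (1 - δ) * Real.log (1 - δ) := by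
  have hx : (0:ℝ) < 1 - δ := by linarith
  set u := -Real.log (1 - δ) with hu
  have hlog : Real.log (1 - δ) = -u := by rw [hu, neg_neg]
  have hu0 : 0 < u := by
    have h := Real.log_neg hx (by linarith)
    rw [hu]; linarith
  have hs : u < Real.sinh u := Real.self_lt_sinh_iff.2 hu0
  have ha : Real.exp (-u) = 1 - δ := by rw [hu, neg_neg, Real.exp_log hx]
  have hinv : Real.exp u * Real.exp (-u) = 1 := by rw [← Real.exp_add]; simp
  rw [Real.sinh_eq] at hs
  rw [hlog]
  nlinarith [Real.exp_pos (-u), Real.exp_pos u]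

/-- Let `0 < ε < 1`, `0 < δ < 1`, `C > 0`, `0 < τ ≤ C`, `0 < T < 1`, and
`0 < q_min ≤ q ≤ 1`.  Let `M ∼ Binomial (n, q)` with `n ∈ ℕ` (modelled by `n` independent
events `A i`, each of probability `q`, with `M` counting how many occur).  If
`n ≥ max (-2 ln (T/2) / (δ² q_min)) (ln (C/τ) / ((1 - δ) ε q_min))`, then with probability
at least `1 - T/2` one has `M ≥ ln (C/τ) / ε`, and hence on this event
`(1 - ε)^M * C ≤ τ`. -/
theorem bn_combined_bound
    {Ω : Type*} [MeasurableSpace Ω] (μ : Measure Ω) [IsProbabilityMeasure μ]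
    (ε δ C τ T q qmin : ℝ)
    (hε0 : 0 < ε) (hε1 : ε < 1) (hδ0 : 0 < δ) (hδ1 : δ < 1)
    (hC : 0 < C) (hτ0 : 0 < τ) (hτC : τ ≤ C) (hT0 : 0 < T) (hT1 : T < 1)
    (hqmin : 0 < qmin) (hq : qmin ≤ q) (hq1 : q ≤ 1)
    (n : ℕ) (A : Fin n → Set Ω) (hmeas : ∀ i, MeasurableSet (A i))
    (hindep : iIndepSet A μ) (hprob : ∀ i, μ (A i) = ENNReal.ofReal q)
    (M : Ω → ℕ) (hM : ∀ ω, (M ω : ℝ) = ∑ i : Fin n, (A i).indicator (fun _ => (1 : ℝ)) ω)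
    (hn : (n : ℝ) ≥ max (-2 * Real.log (T / 2) / (δ ^ 2 * qmin))
        (Real.log (C / τ) / ((1 - δ) * ε * qmin))) :
    μ {ω | Real.log (C / τ) / ε ≤ (M ω : ℝ)} ≥ ENNReal.ofReal (1 - T / 2) ∧
      ∀ ω, Real.log (C / τ) / ε ≤ (M ω : ℝ) → (1 - ε) ^ (M ω) * C ≤ τ := by
  classical
  have hq0 : 0 < q := lt_of_lt_of_le hqmin hq
  have h1δ : (0:ℝ) < 1 - δ := by linarith
  set L : ℝ := Real.log (C / τ) / ε with hLdef
  -- Part 2 first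
  have part2 : ∀ ω, L ≤ (M ω : ℝ) → (1 - ε) ^ (M ω) * C ≤ τ := by
    intro ω hω
    have h1ε : (0:ℝ) < 1 - ε := by linarith
    have hb : (1 - ε : ℝ) ≤ Real.exp (-ε) := by
      have := Real.add_one_le_exp (-ε); linarith
    have hp : (1 - ε : ℝ) ^ (M ω) ≤ Real.exp (-ε) ^ (M ω) :=
      pow_le_pow_left₀ h1ε.le hb _
    have he : Real.exp (-ε) ^ (M ω) = Real.exp (-(ε * (M ω : ℝ))) := by
      rw [← Real.exp_nat_mul]; ring_nf
    have hLe : Real.log (C / τ) ≤ ε * (M ω : ℝ) := by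
      have := (div_le_iff₀ hε0).1 hω
      linarith
    have hexp : Real.exp (-(ε * (M ω : ℝ))) ≤ Real.exp (-Real.log (C / τ)) :=
      Real.exp_le_exp.2 (by linarith)
    have hval : Real.exp (-Real.log (C / τ)) = τ / C := by
      rw [Real.exp_neg, Real.exp_log (by positivity)]
      field_simp
    calc (1 - ε) ^ (M ω) * C ≤ (τ / C) * C := by
          apply mul_le_mul_of_nonneg_right _ hC.le
          calc (1 - ε) ^ (M ω) ≤ Real.exp (-(ε * (M ω : ℝ))) := he ▸ hp
            _ ≤ τ / C := hval ▸ hexp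
      _ = τ := by field_simp
  refine ⟨?_, part2⟩
  -- Setup
  set X : Fin n → Ω → ℝ := fun i => (A i).indicator (fun _ => (1:ℝ)) with hXdef
  have hXmeas : ∀ i, Measurable (X i) := fun i =>
    measurable_const.indicator (hmeas i)
  have hXindep : iIndepFun X μ :=
    hindep.iIndepFun_indicator
  set t : ℝ := Real.log (1 - δ) with htdef
  have ht0 : t < 0 := Real.log_neg h1δ (by linarith)
  have het : Real.exp t = 1 - δ := Real.exp_log h1δ
  -- integrability of each exp (t * X i ·)
  have hXint : ∀ i, Integrable (fun ω => Real.exp (t * X i ω)) μ := by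
    intro i
    have heq : (fun ω => Real.exp (t * X i ω)) =
        fun ω => (A i).indicator (fun _ => Real.exp t - 1) ω + 1 := by
      funext ω
      by_cases hω : ω ∈ A i <;>
        simp [hXdef, Set.indicator_of_mem, Set.indicator_of_notMem, hω]
    rw [heq]
    exact (((integrable_const (Real.exp t - 1)).indicator (hmeas i)).add
      (integrable_const 1))
  -- mgf of each X i
  have hmgf : ∀ i, mgf (X i) μ t = 1 - q * δ := by
    intro i
    have heq : (fun ω => Real.exp (t * X i ω)) =
        fun ω => (A i).indicator (fun _ => Real.exp t - 1) ω + 1 := by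
      funext ω
      by_cases hω : ω ∈ A i <;>
        simp [hXdef, Set.indicator_of_mem, Set.indicator_of_notMem, hω]
    rw [mgf]
    rw [heq]
    rw [integral_add (((integrable_const (Real.exp t - 1)).indicator (hmeas i)))
      (integrable_const 1)]
    rw [integral_indicator_const _ (hmeas i), integral_const]
    simp [measureReal_def, hprob i, ENNReal.toReal_ofReal hq0.le, het, smul_eq_mul]
    ring
  set S : Ω → ℝ := ∑ i : Fin n, X i with hSdef
  have hSapp : ∀ ω, S ω = ∑ i : Fin n, X i ω := by
    intro ω; rw [hSdef]; simp
  have hSmeas : Measurable S := by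
    have h : S = fun ω => ∑ i : Fin n, X i ω := by funext ω; exact hSapp ω
    rw [h]; exact Finset.measurable_sum _ fun i _ => hXmeas i
  have hSint : Integrable (fun ω => Real.exp (t * S ω)) μ :=
    hXindep.integrable_exp_mul_sum hXmeas (fun i _ => hXint i)
  have hmgfS : mgf S μ t = (1 - q * δ) ^ n := by
    rw [hSdef, hXindep.mgf_sum hXmeas]
    simp [hmgf]
  set a : ℝ := (1 - δ) * n * q with hadef
  -- Chernoff
  have hcher := measure_le_le_exp_mul_mgf (X := S) (μ := μ) (t := t) a ht0.le hSint
  rw [hmgfS] at hcher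
  -- bound the RHS by T/2
  have hqδ : 0 < 1 - q * δ := by nlinarith
  have hstep1 : (1 - q * δ : ℝ) ^ n ≤ Real.exp (-(q * δ)) ^ n := by
    apply pow_le_pow_left₀ hqδ.le
    have := Real.add_one_le_exp (-(q * δ)); linarith
  have hrhs : Real.exp (-t * a) * (1 - q * δ) ^ n ≤
      Real.exp (-(n * q) * (δ + (1 - δ) * t)) := by
    calc Real.exp (-t * a) * (1 - q * δ) ^ n
        ≤ Real.exp (-t * a) * Real.exp (-(q * δ)) ^ n := by
          apply mul_le_mul_of_nonneg_left hstep1 (Real.exp_pos _).le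
      _ = Real.exp (-t * a + n * (-(q * δ))) := by
          rw [← Real.exp_nat_mul, ← Real.exp_add]
      _ = Real.exp (-(n * q) * (δ + (1 - δ) * t)) := by
          congr 1; rw [hadef]; ring
  have haux := chernoff_log_aux hδ0 hδ1
  have hnq : -2 * Real.log (T / 2) ≤ (n : ℝ) * (q * δ ^ 2) := by
    have h1 := le_trans (le_max_left _ _) hn
    have h2 : -2 * Real.log (T / 2) ≤ (n : ℝ) * (δ ^ 2 * qmin) := by
      rw [div_le_iff₀ (by positivity)] at h1
      linarith
    have h3 : (n : ℝ) * (δ ^ 2 * qmin) ≤ (n : ℝ) * (q * δ ^ 2) := by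
      have hnn : (0:ℝ) ≤ (n : ℝ) * δ ^ 2 := by positivity
      nlinarith [mul_le_mul_of_nonneg_left hq hnn]
    linarith
  have hTpos : (0:ℝ) < T / 2 := by linarith
  have hexp2 : Real.exp (-(n * q) * (δ + (1 - δ) * t)) ≤ T / 2 := by
    rw [← Real.exp_log hTpos]
    apply Real.exp_le_exp.2
    have hnn : (0:ℝ) ≤ (n : ℝ) * q := by positivity
    have h3 : (n : ℝ) * q * (δ ^ 2 / 2) ≤ (n : ℝ) * q * (δ + (1 - δ) * t) :=
      mul_le_mul_of_nonneg_left haux hnn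
    nlinarith
  have hcher2 : (μ {ω | S ω ≤ a}).toReal ≤ T / 2 :=
    le_trans hcher (le_trans hrhs hexp2)
  have hAset : MeasurableSet {ω | S ω ≤ a} := measurableSet_le hSmeas measurable_const
  have hμle : μ {ω | S ω ≤ a} ≤ ENNReal.ofReal (T / 2) :=
    (ENNReal.le_ofReal_iff_toReal_le (measure_ne_top μ _) hTpos.le).2 hcher2
  -- L ≤ a
  have hLa : L ≤ a := by
    have h1 := le_trans (le_max_right _ _) hn
    have hd : (0:ℝ) < (1 - δ) * ε * qmin := by positivity
    rw [div_le_iff₀ hd] at h1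
    rw [hLdef, hadef, div_le_iff₀ hε0]
    have h2 : (n:ℝ) * ((1 - δ) * ε * qmin) ≤ (n:ℝ) * ((1 - δ) * ε * q) := by
      have hnn : (0:ℝ) ≤ (n:ℝ) * ((1 - δ) * ε) := by positivity
      nlinarith [mul_le_mul_of_nonneg_left hq hnn]
    nlinarith [h1, h2]
  -- event inclusion
  have hsub : {ω | S ω ≤ a}ᶜ ⊆ {ω | L ≤ (M ω : ℝ)} := by
    intro ω hω
    simp only [Set.mem_compl_iff, Set.mem_setOf_eq, not_le] at hω
    simp only [Set.mem_setOf_eq]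
    rw [hM ω]
    rw [hSapp] at hω
    have hω' : a < ∑ i : Fin n, (A i).indicator (fun _ => (1:ℝ)) ω := hω
    exact le_trans hLa (le_of_lt hω')
  have hcompl : μ {ω | S ω ≤ a}ᶜ = 1 - μ {ω | S ω ≤ a} :=
    prob_compl_eq_one_sub hAset
  have : ENNReal.ofReal (1 - T / 2) ≤ μ {ω | S ω ≤ a}ᶜ := by
    rw [hcompl]
    have h1 : ENNReal.ofReal (1 - T / 2) = 1 - ENNReal.ofReal (T / 2) := by
      rw [ENNReal.ofReal_sub _ hTpos.le, ENNReal.ofReal_one]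
    rw [h1]
    exact tsub_le_tsub_left hμle 1
  exact le_trans this (measure_mono hsub)
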